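/- For every n ≥ 3, the set Λ × F_5^(n-3) ⊆ F_5^n is sum-free, has cardinality 28·5^(n-3), and is not normal; hence sf_1(F_5^n) ≥ 28·5^(n-3). -/

import Mathlib

/-- The Lev–Versteegen set `Λ ⊆ F_5^3`. -/
def Lam : Set (ZMod 5 × ZMod 5 × ZMod 5) :=
  {p | (p.1, p.2.1) ∈ ({(1, 0), (-1, 0), (0, 1), (0, -1)} : Set (ZMod 5 × ZMod 5))} ∪
    {(-1, 2, 0), (-1, 2, 1), (2, 1, 1), (2, 1, 2),
      (1, -2, 0), (1, -2, -1), (-2, -1, -1), (-2, -1, -2)}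

/-- The extension `Λ × F_5^{n-3} ⊆ F_5^n`: the first three coordinates lie in `Λ`,
the remaining ones are arbitrary. -/
def LamExt (n : ℕ) (hn : 3 ≤ n) : Set (Fin n → ZMod 5) :=
  {x | (x ⟨0, by omega⟩, x ⟨1, by omega⟩, x ⟨2, by omega⟩) ∈ Lam}

/-- `A` is normal: contained in `H ∪ (-H)` for an affine hyperplane `H` avoiding `0`. -/
def IsNormal (n : ℕ) (A : Set (Fin n → ZMod 5)) : Prop :=
  ∃ (φ : (Fin n → ZMod 5) →ₗ[ZMod 5] ZMod 5) (c : ZMod 5),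
    Function.Surjective φ ∧ c ≠ 0 ∧ A ⊆ {x | φ x = c ∨ φ x = -c}

/-!
Membership in `LamExt n hn` only depends on the image under the surjective linear projection
`π : F_5^n → F_5^3` onto the first three coordinates, and `LamExt n hn = π⁻¹' Λ`. Sum-freeness
pulls back along the additive map `π`; the fibres of `π` are cosets of its kernel, which has
`5^(n-3)` elements, so `|π⁻¹' Λ| = 28 · 5^(n-3)`; and a pair of hyperplanes `φ = ±c` containing
`π⁻¹' Λ` would restrict, along the linear section of `π`, to one containing `Λ`. The remaining
statements about `Λ ⊆ F_5^3` are finite checks.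
-/

open Set

def IsSumFree {G : Type*} [Add G] (A : Set G) : Prop :=
  ∀ x ∈ A, ∀ y ∈ A, x + y ∉ A

theorem IsSumFree.preimage {G H F : Type*} [Add G] [Add H] [FunLike F G H] [AddHomClass F G H]
    {A : Set H} (hA : IsSumFree A) (f : F) : IsSumFree (f ⁻¹' A) := by
  intro x hx y hy hxy
  exact hA _ hx _ hy (by simpa only [mem_preimage, map_add] using hxy)

theorem AddMonoidHom.card_preimage_of_surjective {G H : Type*} [AddGroup G] [AddGroup H]
    (f : G →+ H) (hf : Function.Surjective f) (A : Set H) :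
    Nat.card (f ⁻¹' A) = Nat.card f.ker * Nat.card A := by
  let e := QuotientAddGroup.quotientKerEquivOfSurjective f hf
  have hfe : f ⁻¹' A = QuotientAddGroup.mk ⁻¹' (e ⁻¹' A) := rfl
  rw [hfe, Nat.card_congr (QuotientAddGroup.preimageMkEquivAddSubgroupProdSet _ _), Nat.card_prod,
    Nat.card_preimage_of_injective e.injective (by simp)]

theorem LinearMap.apply_eq_coord_sum {R : Type*} [Semiring R] (ψ : R × R × R →ₗ[R] R)
    (p : R × R × R) :
    ψ p = p.1 * ψ (1, 0, 0) + p.2.1 * ψ (0, 1, 0) + p.2.2 * ψ (0, 0, 1) := by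
  have hp : p = p.1 • (1, 0, 0) + p.2.1 • (0, 1, 0) + p.2.2 • (0, 0, 1) := by
    ext <;> simp
  conv_lhs => rw [hp]
  simp only [map_add, map_smul, smul_eq_mul]

section FirstThree

variable (R : Type*) [Semiring R] {n : ℕ} (hn : 3 ≤ n)

def projFirstThree : (Fin n → R) →ₗ[R] R × R × R :=
  (LinearMap.proj ⟨0, by omega⟩).prod
    ((LinearMap.proj ⟨1, by omega⟩).prod (LinearMap.proj ⟨2, by omega⟩))

def embedFirstThree : R × R × R →ₗ[R] (Fin n → R) :=
  (LinearMap.single R (fun _ => R) ⟨0, by omega⟩).coprod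
    ((LinearMap.single R (fun _ => R) ⟨1, by omega⟩).coprod
      (LinearMap.single R (fun _ => R) ⟨2, by omega⟩))

theorem projFirstThree_embedFirstThree (p : R × R × R) :
    projFirstThree R hn (embedFirstThree R hn p) = p := by
  simp [projFirstThree, embedFirstThree]

end FirstThree

instance : DecidablePred (· ∈ Lam) := fun p => by unfold Lam; infer_instance

theorem lamExt_eq_preimage (n : ℕ) (hn : 3 ≤ n) :
    LamExt n hn = projFirstThree (ZMod 5) hn ⁻¹' Lam :=
  rfl

set_option maxRecDepth 10000 in
theorem isSumFree_lam : IsSumFree Lam := by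
  unfold IsSumFree
  decide

theorem ncard_lam : Lam.ncard = 28 := by
  rw [ncard_eq_toFinset_card']
  decide

/- Since `Λ` contains `(±1, 0, z)` and `(0, ±1, z)` for every `z`, a form `a x + b y + d z` taking
only the values `±c` on `Λ` has `d = 0` and `a, b ∈ {±c}`; then `(-1, 2, 0)` forces `b = a` and
`(2, 1, 1)` forces `b = -a`. -/
set_option maxRecDepth 10000 in
theorem lam_exists_not_mem_levelPair : ∀ a b d c : ZMod 5, c ≠ 0 →
    ∃ p ∈ Lam, p.1 * a + p.2.1 * b + p.2.2 * d ≠ c ∧ p.1 * a + p.2.1 * b + p.2.2 * d ≠ -c := by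
  decide

theorem not_lam_subset_levelPair (ψ : ZMod 5 × ZMod 5 × ZMod 5 →ₗ[ZMod 5] ZMod 5) {c : ZMod 5}
    (hc : c ≠ 0) : ¬ Lam ⊆ {p | ψ p = c ∨ ψ p = -c} := by
  intro hsub
  obtain ⟨p, hp, hpc, hpc'⟩ := lam_exists_not_mem_levelPair _ _ _ c hc
  rcases hsub hp with h | h <;> rw [ψ.apply_eq_coord_sum] at h
  exacts [hpc h, hpc' h]

theorem isSumFree_lamExt (n : ℕ) (hn : 3 ≤ n) : IsSumFree (LamExt n hn) :=
  isSumFree_lam.preimage (projFirstThree (ZMod 5) hn)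

theorem not_isNormal_lamExt (n : ℕ) (hn : 3 ≤ n) : ¬ IsNormal n (LamExt n hn) := by
  rintro ⟨φ, c, -, hc, hsub⟩
  refine not_lam_subset_levelPair (φ ∘ₗ embedFirstThree (ZMod 5) hn) hc fun p hp => hsub ?_
  rw [lamExt_eq_preimage, mem_preimage, projFirstThree_embedFirstThree]
  exact hp

theorem ncard_lamExt (n : ℕ) (hn : 3 ≤ n) : (LamExt n hn).ncard = 28 * 5 ^ (n - 3) := by
  let π := (projFirstThree (ZMod 5) hn).toAddMonoidHom
  have hπ : Function.Surjective π := fun p => ⟨_, projFirstThree_embedFirstThree _ hn p⟩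
  have hker : Nat.card π.ker = 5 ^ (n - 3) := by
    have h := π.card_preimage_of_surjective hπ univ
    rw [preimage_univ, Nat.card_univ, Nat.card_univ, Nat.card_fun, Nat.card_prod, Nat.card_prod,
      Nat.card_zmod, Nat.card_fin] at h
    have h5 : 5 ^ n = 5 ^ (n - 3) * (5 * (5 * 5)) := by
      rw [← pow_three, ← pow_add, Nat.sub_add_cancel hn]
    exact Nat.eq_of_mul_eq_mul_right (by norm_num) (h.symm.trans h5)
  have h := π.card_preimage_of_surjective hπ Lam
  rwa [Nat.card_coe_set_eq, Nat.card_coe_set_eq, ncard_lam, hker, mul_comm] at h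

theorem stmt_19 (n : ℕ) (hn : 3 ≤ n) :
    (∀ x ∈ LamExt n hn, ∀ y ∈ LamExt n hn, x + y ∉ LamExt n hn) ∧
      (LamExt n hn).ncard = 28 * 5 ^ (n - 3) ∧
      ¬ IsNormal n (LamExt n hn) ∧
      ∃ B : Set (Fin n → ZMod 5),
        (∀ x ∈ B, ∀ y ∈ B, x + y ∉ B) ∧ ¬ IsNormal n B ∧
          28 * 5 ^ (n - 3) ≤ B.ncard :=
  ⟨isSumFree_lamExt n hn, ncard_lamExt n hn, not_isNormal_lamExt n hn,
    LamExt n hn, isSumFree_lamExt n hn, not_isNormal_lamExt n hn, (ncard_lamExt n hn).ge⟩
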